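/- arXiv:1001.2622 — 5 statements merged into one kernel-verified Lean document; each statement's English description precedes it below -/
import Mathlib

section
/- Let φ be a supersymmetric state with respect to a superderivation δ and (π, H, Ω) its GNS representation. Then Q π(A)Ω := π(δ(A))Ω is a well-defined closable linear operator on the dense subspace π(A₀)Ω, satisfying QΩ = 0 and Q*Ω = 0. -/
open scoped ComplexOrder

/-- The linear map `a ↦ π a Ω` from the algebra into the Hilbert space. -/
noncomputable def gnsVec {F H : Type*} [NormedRing F] [StarRing F] [NormedAlgebra ℂ F]
    [NormedAddCommGroup H] [InnerProductSpace ℂ H] [CompleteSpace H]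
    (π : F →⋆ₐ[ℂ] (H →L[ℂ] H)) (Ω : H) : F →ₗ[ℂ] H where
  toFun a := π a Ω
  map_add' a b := by simp
  map_smul' c a := by simp

/-!
For `a, b ∈ A₀` put `c = (γ b)⋆`, so that `γ c = b⋆`. Applying `φ` to the Leibniz rule for
`δ (c a)` and using supersymmetry gives
`⟪π b Ω, π (δ a) Ω⟫ = φ (b⋆ δ a) = - φ (δ c a) = ⟪-π (δ c)⋆ Ω, π a Ω⟫`.
This identity between the two components of the graph `{(π a Ω, π (δ a) Ω)}` is closed, so it
holds on the closure of the graph; since the vectors `π b Ω` are dense, a point of the closure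
with first component `0` has second component `0`. Thus the closure is a graph: `Q` is well
defined and closable. Then `δ 1 = 0` gives `Q Ω = 0`, and `⟪Ω, Q (π a Ω)⟫ = φ (δ a) = 0`
gives `Q⋆ Ω = 0`.
-/

namespace Submodule

variable {R E F : Type*} [CommRing R] [AddCommGroup E] [Module R E] [AddCommGroup F] [Module R F]

theorem toLinearPMap_apply_of_mem {g : Submodule R (E × F)}
    (hg : ∀ x ∈ g, x.1 = 0 → x.2 = 0) (x : g.toLinearPMap.domain) {y : F}
    (hxy : ((x : E), y) ∈ g) : g.toLinearPMap x = y :=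
  (existsUnique_from_graph (fun hx hx₀ => hg _ hx hx₀) x.2).unique
    (mem_graph_toLinearPMap hg x) hxy

theorem toLinearPMap_map_prod_domain {M : Type*} [AddCommGroup M] [Module R M]
    (p : Submodule R M) (v : M →ₗ[R] E) (d : M →ₗ[R] F) :
    (p.map (v.prod d)).toLinearPMap.domain = p.map v := by
  rw [toLinearPMap_domain, ← map_comp]
  rfl

theorem toLinearPMap_isClosable [TopologicalSpace R] [TopologicalSpace E] [TopologicalSpace F]
    [ContinuousAdd E] [ContinuousAdd F] [ContinuousSMul R E] [ContinuousSMul R F]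
    {g : Submodule R (E × F)} (hg : ∀ x ∈ g.topologicalClosure, x.1 = 0 → x.2 = 0) :
    g.toLinearPMap.IsClosable := by
  have hg' : ∀ x ∈ g, x.1 = 0 → x.2 = 0 := fun x hx => hg x (g.le_topologicalClosure hx)
  exact ⟨g.topologicalClosure.toLinearPMap, by
    rw [toLinearPMap_graph_eq g hg', toLinearPMap_graph_eq _ hg]⟩

end Submodule

namespace LinearPMap

variable {𝕜 E F : Type*} [RCLike 𝕜] [NormedAddCommGroup E] [InnerProductSpace 𝕜 E]
  [NormedAddCommGroup F] [InnerProductSpace 𝕜 F] [CompleteSpace E] {T : E →ₗ.[𝕜] F} {y : F}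

theorem mem_adjoint_domain_of_inner_eq_zero (h : ∀ x : T.domain, inner 𝕜 y (T x) = 0) :
    y ∈ T†.domain :=
  mem_adjoint_domain_of_exists y ⟨0, fun x => by rw [inner_zero_left, h]⟩

theorem adjoint_apply_eq_zero_of_inner_eq_zero (hT : Dense (T.domain : Set E))
    (h : ∀ x : T.domain, inner 𝕜 y (T x) = 0) (hy : y ∈ T†.domain) : T† ⟨y, hy⟩ = 0 :=
  adjoint_apply_eq hT _ fun x => by rw [inner_zero_left, h]

end LinearPMap

section GraphOfPairing

variable {𝕜 E M : Type*} [RCLike 𝕜] [NormedAddCommGroup E] [InnerProductSpace 𝕜 E]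
  [AddCommGroup M] [Module 𝕜 M] {p : Submodule 𝕜 M} {v d : M →ₗ[𝕜] E}

theorem snd_eq_zero_of_mem_closure_map_prod (d' : M → E) (hdense : Dense (p.map v : Set E))
    (hpair : ∀ b ∈ p, ∀ a ∈ p, inner 𝕜 (v b) (d a) = inner 𝕜 (d' b) (v a))
    {x : E × E} (hx : x ∈ (p.map (v.prod d)).topologicalClosure) (hx₁ : x.1 = 0) :
    x.2 = 0 := by
  refine hdense.eq_zero_of_inner_right 𝕜 ?_
  rintro _ ⟨b, hb, rfl⟩
  let S : Set (E × E) := {q | inner 𝕜 (v b) q.2 = inner 𝕜 (d' b) q.1}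
  have hS : IsClosed S :=
    isClosed_eq (continuous_const.inner continuous_snd) (continuous_const.inner continuous_fst)
  have hgraph : ((p.map (v.prod d) : Submodule 𝕜 (E × E)) : Set (E × E)) ⊆ S := by
    rintro _ ⟨a, ha, rfl⟩
    exact hpair b hb a ha
  have hxS : x ∈ S := closure_minimal hgraph hS <| by
    rwa [← Submodule.topologicalClosure_coe]
  simpa [S, hx₁] using hxS

end GraphOfPairing

section Superderivation

variable {F H : Type*} [NormedRing F] [StarRing F] [NormedAlgebra ℂ F]
  [NormedAddCommGroup H] [InnerProductSpace ℂ H] [CompleteSpace H]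
  {π : F →⋆ₐ[ℂ] (H →L[ℂ] H)} {Ω : H} {φ : F →ₗ[ℂ] ℂ}

theorem apply_mul_eq_inner_of_gns (hGNS : ∀ x : F, φ x = inner ℂ Ω (π x Ω)) (x y : F) :
    φ (x * y) = inner ℂ (π (star x) Ω) (π y Ω) := by
  rw [hGNS, map_mul, mul_apply_eq_comp, map_star,
    ContinuousLinearMap.star_eq_adjoint, ContinuousLinearMap.adjoint_inner_left]

theorem inner_gns_superderivation [StarModule ℂ F] (γ : F ≃⋆ₐ[ℂ] F) (hγ : ∀ x, γ (γ x) = x)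
    (A₀ : StarSubalgebra ℂ F) (hA₀ : ∀ a ∈ A₀, γ a ∈ A₀) (δ : F →ₗ[ℂ] F)
    (hleib : ∀ a ∈ A₀, ∀ b ∈ A₀, δ (a * b) = δ a * b + γ a * δ b)
    (hsusy : ∀ a ∈ A₀, φ (δ a) = 0) (hGNS : ∀ x : F, φ x = inner ℂ Ω (π x Ω))
    {a b : F} (ha : a ∈ A₀) (hb : b ∈ A₀) :
    inner ℂ (π b Ω) (π (δ a) Ω) = inner ℂ (-(π (star (δ (star (γ b)))) Ω)) (π a Ω) := by
  have hc : star (γ b) ∈ A₀ := star_mem (hA₀ b hb)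
  have hγc : γ (star (γ b)) = star b := by rw [map_star, hγ]
  have hsum : φ (δ (star (γ b)) * a) + φ (star b * δ a) = 0 := by
    rw [← map_add, ← hγc, ← hleib _ hc a ha]
    exact hsusy _ (mul_mem hc ha)
  rw [inner_neg_left, ← apply_mul_eq_inner_of_gns hGNS, ← eq_neg_of_add_eq_zero_right hsum,
    apply_mul_eq_inner_of_gns hGNS, star_star]

end Superderivation

theorem supercharge_well_defined_closable_general
    {F : Type*} [NormedRing F] [StarRing F] [NormedAlgebra ℂ F]
    [StarModule ℂ F]
    {H : Type*} [NormedAddCommGroup H] [InnerProductSpace ℂ H] [CompleteSpace H]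
    (γ : F ≃⋆ₐ[ℂ] F) (hγ : ∀ x, γ (γ x) = x)
    (A₀ : StarSubalgebra ℂ F) (hA₀ : ∀ a ∈ A₀, γ a ∈ A₀)
    (δ : F →ₗ[ℂ] F)
    (hleib : ∀ a ∈ A₀, ∀ b ∈ A₀, δ (a * b) = δ a * b + γ a * δ b)
    (φ : F →ₗ[ℂ] ℂ)
    (hsusy : ∀ a ∈ A₀, φ (δ a) = 0)
    (π : F →⋆ₐ[ℂ] (H →L[ℂ] H)) (Ω : H)
    (hGNS : ∀ x : F, φ x = inner ℂ Ω (π x Ω))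
    (hdense :
      Dense (((Subalgebra.toSubmodule A₀.toSubalgebra).map (gnsVec π Ω) : Submodule ℂ H)
        : Set H)) :
    ∃ Q : H →ₗ.[ℂ] H,
      Q.domain = (Subalgebra.toSubmodule A₀.toSubalgebra).map (gnsVec π Ω) ∧
      (∀ a ∈ A₀, ∀ h : π a Ω ∈ Q.domain, Q ⟨π a Ω, h⟩ = π (δ a) Ω) ∧
      Q.IsClosable ∧
      (Ω ∈ Q.domain) ∧ (∀ h : Ω ∈ Q.domain, Q ⟨Ω, h⟩ = 0) ∧
      (Ω ∈ Q.adjoint.domain) ∧ (∀ h : Ω ∈ Q.adjoint.domain, Q.adjoint ⟨Ω, h⟩ = 0) := by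
  set G := (Subalgebra.toSubmodule A₀.toSubalgebra).map
    ((gnsVec π Ω).prod ((gnsVec π Ω).comp δ))
  have hGclosure : ∀ x ∈ G.topologicalClosure, x.1 = 0 → x.2 = 0 := fun x =>
    snd_eq_zero_of_mem_closure_map_prod _ hdense
      (fun b hb a ha => inner_gns_superderivation γ hγ A₀ hA₀ δ hleib hsusy hGNS ha hb)
  have hG : ∀ x ∈ G, x.1 = 0 → x.2 = 0 := fun x hx => hGclosure x (G.le_topologicalClosure hx)
  have hdomain : G.toLinearPMap.domain = _ := Submodule.toLinearPMap_map_prod_domain _ _ _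
  have happly : ∀ a ∈ A₀, ∀ h : π a Ω ∈ G.toLinearPMap.domain,
      G.toLinearPMap ⟨π a Ω, h⟩ = π (δ a) Ω := fun a ha _ =>
    Submodule.toLinearPMap_apply_of_mem hG _ ⟨a, ha, rfl⟩
  have hδ1 : δ 1 = 0 := by simpa using hleib 1 A₀.one_mem 1 A₀.one_mem
  have hΩ : Ω ∈ G.toLinearPMap.domain := ⟨(Ω, 0), ⟨1, A₀.one_mem, by simp [gnsVec, hδ1]⟩, rfl⟩
  have hΩperp : ∀ x : G.toLinearPMap.domain, inner ℂ Ω (G.toLinearPMap x) = 0 := by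
    rintro ⟨_, ⟨_, ⟨a, ha, rfl⟩, rfl⟩⟩
    rw [Submodule.toLinearPMap_apply_of_mem hG _ ⟨a, ha, rfl⟩]
    exact (hGNS (δ a)).symm.trans (hsusy a ha)
  refine ⟨G.toLinearPMap, hdomain, happly, Submodule.toLinearPMap_isClosable hGclosure, hΩ,
    fun h => by simpa [hδ1] using happly 1 A₀.one_mem (by simpa using h),
    LinearPMap.mem_adjoint_domain_of_inner_eq_zero hΩperp,
    LinearPMap.adjoint_apply_eq_zero_of_inner_eq_zero (hdomain ▸ hdense) hΩperp⟩

/-- Let `φ` be a supersymmetric state with respect to `δ` and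
`(π, H, Ω)` its GNS representation.  Then `Q (π A Ω) := π (δ A) Ω` is a
well-defined closable linear operator on the dense subspace `π(A₀)Ω`, and it
satisfies `Q Ω = 0` and `Q* Ω = 0`. -/
theorem supercharge_well_defined_closable
    {F : Type*} [NormedRing F] [StarRing F] [CStarRing F] [NormedAlgebra ℂ F]
    [StarModule ℂ F] [CompleteSpace F]
    {H : Type*} [NormedAddCommGroup H] [InnerProductSpace ℂ H] [CompleteSpace H]
    (γ : F ≃⋆ₐ[ℂ] F) (hγ : ∀ x, γ (γ x) = x)
    (A₀ : StarSubalgebra ℂ F) (hA₀ : ∀ a ∈ A₀, γ a ∈ A₀)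
    (δ : F →ₗ[ℂ] F)
    (hodd : ∀ a ∈ A₀, δ (γ a) = - γ (δ a))
    (hleib : ∀ a ∈ A₀, ∀ b ∈ A₀, δ (a * b) = δ a * b + γ a * δ b)
    (φ : F →ₗ[ℂ] ℂ) (hφpos : ∀ x : F, 0 ≤ φ (star x * x)) (hφ1 : φ 1 = 1)
    (hsusy : ∀ a ∈ A₀, φ (δ a) = 0)
    (π : F →⋆ₐ[ℂ] (H →L[ℂ] H)) (Ω : H)
    (hGNS : ∀ x : F, φ x = inner ℂ Ω (π x Ω))
    (hdense :
      Dense (((Subalgebra.toSubmodule A₀.toSubalgebra).map (gnsVec π Ω) : Submodule ℂ H)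
        : Set H)) :
    ∃ Q : H →ₗ.[ℂ] H,
      Q.domain = (Subalgebra.toSubmodule A₀.toSubalgebra).map (gnsVec π Ω) ∧
      (∀ a ∈ A₀, ∀ h : π a Ω ∈ Q.domain, Q ⟨π a Ω, h⟩ = π (δ a) Ω) ∧
      Q.IsClosable ∧
      (Ω ∈ Q.domain) ∧ (∀ h : Ω ∈ Q.domain, Q ⟨Ω, h⟩ = 0) ∧
      (Ω ∈ Q.adjoint.domain) ∧ (∀ h : Ω ∈ Q.adjoint.domain, Q.adjoint ⟨Ω, h⟩ = 0) :=
  supercharge_well_defined_closable_general γ hγ A₀ hA₀ δ hleib φ hsusy π Ω hGNS hdense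
end

section
/- With Q defined on π(A₀)Ω by Q π(A)Ω = π(δ(A))Ω for a supersymmetric state φ, the operator equalities π(δ(A)) = Q π(A) - π(γ(A)) Q and π(δ*(A)) = Q* π(A) - π(γ(A)) Q* hold on π(A₀)Ω for all A ∈ A₀. -/
/-!
Supersymmetry of `φ` makes `δ` and `δ*` formal adjoints on the GNS vectors: expanding
`φ (δ (γ (C*) A)) = 0` with the graded Leibniz rule and the oddness of `δ` gives
`⟪π (δ A) Ω, π C Ω⟫ = ⟪π A Ω, π (δ* C) Ω⟫`. As `π(A₀)Ω` is dense, this pins down `Q*` on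
`π(A₀)Ω` as `π (δ* ·) Ω`. Both `δ` and `δ*` satisfy the graded Leibniz rule on `A₀`, and
`π A (π B Ω) = π (A B) Ω`, so the two operator identities are these Leibniz rules read in `H`.
-/

open scoped ComplexOrder

open scoped InnerProductSpace LinearPMap

section Superderivation

variable {R F : Type*} [CommSemiring R] [StarRing R] [Ring F] [StarRing F] [Algebra R F]

/-- The paper's `δ*`. -/
def dstar (γ : F ≃⋆ₐ[R] F) (δ : F →ₗ[R] F) (c : F) : F :=
  -star (δ (γ (star c)))

variable [StarModule R F]

theorem dstar_mul (γ : F ≃⋆ₐ[R] F) (hγ : ∀ x, γ (γ x) = x)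
    {A₀ : StarSubalgebra R F} (hA₀ : ∀ a ∈ A₀, γ a ∈ A₀) (δ : F →ₗ[R] F)
    (hleib : ∀ a ∈ A₀, ∀ b ∈ A₀, δ (a * b) = δ a * b + γ a * δ b)
    {a b : F} (ha : a ∈ A₀) (hb : b ∈ A₀) :
    dstar γ δ (a * b) = dstar γ δ a * b + γ a * dstar γ δ b := by
  have hγa : star (γ (star a)) = γ a := by rw [← map_star, star_star]
  have hγb : star (γ (γ (star b))) = b := by rw [hγ, star_star]
  rw [dstar, dstar, dstar, star_mul, map_mul,
    hleib _ (hA₀ _ (star_mem hb)) _ (hA₀ _ (star_mem ha)), star_add, star_mul, star_mul, hγa, hγb]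
  noncomm_ring

end Superderivation

section GNS

variable {F H : Type*} [Ring F] [StarRing F] [Algebra ℂ F]
  [NormedAddCommGroup H] [InnerProductSpace ℂ H] [CompleteSpace H]
  {π : F →⋆ₐ[ℂ] (H →L[ℂ] H)} {Ω : H} {φ : F →ₗ[ℂ] ℂ}

theorem inner_apply_eq_of_gns (hGNS : ∀ x : F, φ x = ⟪Ω, π x Ω⟫_ℂ) (x y : F) :
    ⟪π x Ω, π y Ω⟫_ℂ = φ (star x * y) := by
  rw [hGNS, map_mul, mul_apply_eq_comp, map_star,
    ContinuousLinearMap.star_eq_adjoint, ContinuousLinearMap.adjoint_inner_right]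

theorem map_star_eq_conj_of_gns (hGNS : ∀ x : F, φ x = ⟪Ω, π x Ω⟫_ℂ) (x : F) :
    φ (star x) = starRingEnd ℂ (φ x) := by
  rw [hGNS, hGNS, map_star, ContinuousLinearMap.star_eq_adjoint,
    ContinuousLinearMap.adjoint_inner_right, inner_conj_symm]

variable [StarModule ℂ F]

theorem inner_apply_superderivation_eq_inner_apply_dstar
    {γ : F ≃⋆ₐ[ℂ] F} (hγ : ∀ x, γ (γ x) = x)
    {A₀ : StarSubalgebra ℂ F} (hA₀ : ∀ a ∈ A₀, γ a ∈ A₀) {δ : F →ₗ[ℂ] F}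
    (hodd : ∀ a ∈ A₀, δ (γ a) = - γ (δ a))
    (hleib : ∀ a ∈ A₀, ∀ b ∈ A₀, δ (a * b) = δ a * b + γ a * δ b)
    (hsusy : ∀ a ∈ A₀, φ (δ a) = 0) (hGNS : ∀ x : F, φ x = ⟪Ω, π x Ω⟫_ℂ)
    {A C : F} (hA : A ∈ A₀) (hC : C ∈ A₀) :
    ⟪π (δ A) Ω, π C Ω⟫_ℂ = ⟪π A Ω, π (dstar γ δ C) Ω⟫_ℂ := by
  have hC' : γ (star C) ∈ A₀ := hA₀ _ (star_mem hC)
  have hsusy' : φ (star C * δ A) = φ (γ (δ (star C)) * A) := by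
    have h := hsusy _ (mul_mem hC' hA)
    rw [hleib _ hC' _ hA, hodd _ (star_mem hC), hγ, map_add, neg_mul, map_neg] at h
    linear_combination h
  calc ⟪π (δ A) Ω, π C Ω⟫_ℂ
      = starRingEnd ℂ (φ (star C * δ A)) := by
        rw [inner_apply_eq_of_gns hGNS, ← map_star_eq_conj_of_gns hGNS, star_mul, star_star]
    _ = starRingEnd ℂ (φ (γ (δ (star C)) * A)) := by rw [hsusy']
    _ = ⟪π A Ω, π (dstar γ δ C) Ω⟫_ℂ := by
        rw [inner_apply_eq_of_gns hGNS, dstar, mul_neg, ← star_mul, map_neg,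
          map_star_eq_conj_of_gns hGNS, hodd _ (star_mem hC), neg_mul, map_neg, map_neg, neg_neg]

end GNS

section Supercharge

variable {F H : Type*} [NormedRing F] [StarRing F] [NormedAlgebra ℂ F] [StarModule ℂ F]
  [NormedAddCommGroup H] [InnerProductSpace ℂ H] [CompleteSpace H]
  {π : F →⋆ₐ[ℂ] (H →L[ℂ] H)} {Ω : H} {A₀ : StarSubalgebra ℂ F} {Q : H →ₗ.[ℂ] H}
  {δ : F →ₗ[ℂ] F}

theorem gns_mem_domain
    (hQdom : Q.domain = (Subalgebra.toSubmodule A₀.toSubalgebra).map (gnsVec π Ω))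
    {c : F} (hc : c ∈ A₀) : π c Ω ∈ Q.domain :=
  hQdom ▸ ⟨c, hc, rfl⟩

theorem apply_gns_eq (hQ : ∀ a ∈ A₀, ∀ h : π a Ω ∈ Q.domain, Q ⟨π a Ω, h⟩ = π (δ a) Ω)
    {c : F} (hc : c ∈ A₀) {v : H} (hv : v = π c Ω) (h : v ∈ Q.domain) :
    Q ⟨v, h⟩ = π (δ c) Ω := by
  subst hv
  exact hQ c hc h

variable {δ' : F → F}
  (hQdom : Q.domain = (Subalgebra.toSubmodule A₀.toSubalgebra).map (gnsVec π Ω))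
  (hQ : ∀ a ∈ A₀, ∀ h : π a Ω ∈ Q.domain, Q ⟨π a Ω, h⟩ = π (δ a) Ω)
  (hformal : ∀ a ∈ A₀, ∀ c ∈ A₀, ⟪π (δ a) Ω, π c Ω⟫_ℂ = ⟪π a Ω, π (δ' c) Ω⟫_ℂ)
include hQdom hQ hformal

theorem inner_apply_formalAdjoint_eq_inner_apply {c : F} (hc : c ∈ A₀) (x : Q.domain) :
    ⟪π (δ' c) Ω, (x : H)⟫_ℂ = ⟪π c Ω, Q x⟫_ℂ := by
  obtain ⟨x, hx⟩ := x
  obtain ⟨a, ha, rfl⟩ := hQdom ▸ hx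
  rw [apply_gns_eq hQ ha (rfl : gnsVec π Ω a = π a Ω)]
  change ⟪π (δ' c) Ω, π a Ω⟫_ℂ = _
  rw [← inner_conj_symm, ← hformal a ha c hc, inner_conj_symm]

theorem gns_mem_adjoint_domain {c : F} (hc : c ∈ A₀) : π c Ω ∈ Q†.domain :=
  LinearPMap.mem_adjoint_domain_of_exists _
    ⟨_, inner_apply_formalAdjoint_eq_inner_apply hQdom hQ hformal hc⟩

theorem adjoint_apply_gns_eq (hdense : Dense (Q.domain : Set H))
    {c : F} (hc : c ∈ A₀) {v : H} (hv : v = π c Ω) (h : v ∈ Q†.domain) :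
    Q† ⟨v, h⟩ = π (δ' c) Ω := by
  subst hv
  exact LinearPMap.adjoint_apply_eq hdense _
    (inner_apply_formalAdjoint_eq_inner_apply hQdom hQ hformal hc)

end Supercharge

theorem supercharge_implements_superderivation_general
    {F : Type*} [NormedRing F] [StarRing F] [NormedAlgebra ℂ F]
    [StarModule ℂ F]
    {H : Type*} [NormedAddCommGroup H] [InnerProductSpace ℂ H] [CompleteSpace H]
    (γ : F ≃⋆ₐ[ℂ] F) (hγ : ∀ x, γ (γ x) = x)
    (A₀ : StarSubalgebra ℂ F) (hA₀ : ∀ a ∈ A₀, γ a ∈ A₀)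
    (δ : F →ₗ[ℂ] F)
    (hodd : ∀ a ∈ A₀, δ (γ a) = - γ (δ a))
    (hleib : ∀ a ∈ A₀, ∀ b ∈ A₀, δ (a * b) = δ a * b + γ a * δ b)
    (φ : F →ₗ[ℂ] ℂ)
    (hsusy : ∀ a ∈ A₀, φ (δ a) = 0)
    (π : F →⋆ₐ[ℂ] (H →L[ℂ] H)) (Ω : H)
    (hGNS : ∀ x : F, φ x = inner ℂ Ω (π x Ω))
    (hdense :
      Dense (((Subalgebra.toSubmodule A₀.toSubalgebra).map (gnsVec π Ω) : Submodule ℂ H)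
        : Set H))
    (Q : H →ₗ.[ℂ] H)
    (hQdom : Q.domain = (Subalgebra.toSubmodule A₀.toSubalgebra).map (gnsVec π Ω))
    (hQ : ∀ a ∈ A₀, ∀ h : π a Ω ∈ Q.domain, Q ⟨π a Ω, h⟩ = π (δ a) Ω) :
    ∀ a ∈ A₀, ∀ b ∈ A₀,
      -- the vectors of π(A₀)Ω lie in the domains of Q and Q*
      (π a (π b Ω) ∈ Q.domain) ∧ (π b Ω ∈ Q.domain) ∧
      (π a (π b Ω) ∈ Q.adjoint.domain) ∧ (π b Ω ∈ Q.adjoint.domain) ∧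
      -- π(δ(A)) = Q π(A) - π(γ(A)) Q on π(A₀)Ω
      (∀ (h1 : π a (π b Ω) ∈ Q.domain) (h2 : π b Ω ∈ Q.domain),
        π (δ a) (π b Ω) = Q ⟨π a (π b Ω), h1⟩ - π (γ a) (Q ⟨π b Ω, h2⟩)) ∧
      -- π(δ*(A)) = Q* π(A) - π(γ(A)) Q* on π(A₀)Ω
      (∀ (h1 : π a (π b Ω) ∈ Q.adjoint.domain) (h2 : π b Ω ∈ Q.adjoint.domain),
        π (- star (δ (γ (star a)))) (π b Ω)
          = Q.adjoint ⟨π a (π b Ω), h1⟩ - π (γ a) (Q.adjoint ⟨π b Ω, h2⟩)) := by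
  have hformal : ∀ a ∈ A₀, ∀ c ∈ A₀,
      ⟪π (δ a) Ω, π c Ω⟫_ℂ = ⟪π a Ω, π (dstar γ δ c) Ω⟫_ℂ := fun a ha c hc =>
    inner_apply_superderivation_eq_inner_apply_dstar hγ hA₀ hodd hleib hsusy hGNS ha hc
  intro a ha b hb
  have hab : a * b ∈ A₀ := mul_mem ha hb
  have hprod : π a (π b Ω) = π (a * b) Ω := by rw [map_mul, mul_apply_eq_comp]
  refine ⟨hprod ▸ gns_mem_domain hQdom hab, gns_mem_domain hQdom hb,
    hprod ▸ gns_mem_adjoint_domain hQdom hQ hformal hab,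
    gns_mem_adjoint_domain hQdom hQ hformal hb, fun h1 h2 => ?_, fun h1 h2 => ?_⟩
  · rw [apply_gns_eq hQ hab hprod, apply_gns_eq hQ hb rfl, hleib a ha b hb]
    simp only [map_add, map_mul, add_apply, mul_apply_eq_comp]
    abel
  · change π (dstar γ δ a) (π b Ω) = _
    rw [adjoint_apply_gns_eq hQdom hQ hformal (hQdom ▸ hdense) hab hprod,
      adjoint_apply_gns_eq hQdom hQ hformal (hQdom ▸ hdense) hb rfl,
      dstar_mul γ hγ hA₀ δ hleib ha hb]
    simp only [map_add, map_mul, add_apply, mul_apply_eq_comp]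
    abel

/-- With `Q` defined on `π(A₀)Ω` by `Q (π A Ω) = π (δ A) Ω` for a
supersymmetric state `φ`, the operator equalities
`π (δ A) = Q π(A) - π (γ A) Q` and `π (δ* A) = Q* π(A) - π (γ A) Q*` hold on
`π(A₀)Ω`, for all `A ∈ A₀`. -/
theorem supercharge_implements_superderivation
    {F : Type*} [NormedRing F] [StarRing F] [CStarRing F] [NormedAlgebra ℂ F]
    [StarModule ℂ F] [CompleteSpace F]
    {H : Type*} [NormedAddCommGroup H] [InnerProductSpace ℂ H] [CompleteSpace H]
    (γ : F ≃⋆ₐ[ℂ] F) (hγ : ∀ x, γ (γ x) = x)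
    (A₀ : StarSubalgebra ℂ F) (hA₀ : ∀ a ∈ A₀, γ a ∈ A₀)
    (δ : F →ₗ[ℂ] F)
    (hodd : ∀ a ∈ A₀, δ (γ a) = - γ (δ a))
    (hleib : ∀ a ∈ A₀, ∀ b ∈ A₀, δ (a * b) = δ a * b + γ a * δ b)
    (φ : F →ₗ[ℂ] ℂ) (hφpos : ∀ x : F, 0 ≤ φ (star x * x)) (hφ1 : φ 1 = 1)
    (hsusy : ∀ a ∈ A₀, φ (δ a) = 0)
    (π : F →⋆ₐ[ℂ] (H →L[ℂ] H)) (Ω : H)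
    (hGNS : ∀ x : F, φ x = inner ℂ Ω (π x Ω))
    (hdense :
      Dense (((Subalgebra.toSubmodule A₀.toSubalgebra).map (gnsVec π Ω) : Submodule ℂ H)
        : Set H))
    (Q : H →ₗ.[ℂ] H)
    (hQdom : Q.domain = (Subalgebra.toSubmodule A₀.toSubalgebra).map (gnsVec π Ω))
    (hQ : ∀ a ∈ A₀, ∀ h : π a Ω ∈ Q.domain, Q ⟨π a Ω, h⟩ = π (δ a) Ω) :
    ∀ a ∈ A₀, ∀ b ∈ A₀,
      -- the vectors of π(A₀)Ω lie in the domains of Q and Q*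
      (π a (π b Ω) ∈ Q.domain) ∧ (π b Ω ∈ Q.domain) ∧
      (π a (π b Ω) ∈ Q.adjoint.domain) ∧ (π b Ω ∈ Q.adjoint.domain) ∧
      -- π(δ(A)) = Q π(A) - π(γ(A)) Q on π(A₀)Ω
      (∀ (h1 : π a (π b Ω) ∈ Q.domain) (h2 : π b Ω ∈ Q.domain),
        π (δ a) (π b Ω) = Q ⟨π a (π b Ω), h1⟩ - π (γ a) (Q ⟨π b Ω, h2⟩)) ∧
      -- π(δ*(A)) = Q* π(A) - π(γ(A)) Q* on π(A₀)Ω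
      (∀ (h1 : π a (π b Ω) ∈ Q.adjoint.domain) (h2 : π b Ω ∈ Q.adjoint.domain),
        π (- star (δ (γ (star a)))) (π b Ω)
          = Q.adjoint ⟨π a (π b Ω), h1⟩ - π (γ a) (Q.adjoint ⟨π b Ω, h2⟩)) :=
  supercharge_implements_superderivation_general γ hγ A₀ hA₀ δ hodd hleib φ hsusy π Ω hGNS hdense Q
    hQdom hQ
end

section
/- Suppose a supersymmetric state φ with respect to δ on a norm-dense A₀ exists and the GNS representation (π, H, Ω) of φ is faithful. Then δ restricted to A₀ is closable in the norm of F: if A_n ∈ A₀, A_n → 0 and δ(A_n) → D in norm, then D = 0. -/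
open scoped ComplexOrder
open Filter Topology
open scoped CStarAlgebra

/-!
Pass to the limit in the identity `φ (δ (a * (x * c))) = 0`, expanded by the twisted Leibniz
rule: along `x = Aₙ → 0` it gives `φ (γ a * D * c) = 0` for `a, c ∈ A₀`, hence, by density
and since `γ` is onto, `φ (y * D * c) = 0` for all `y, c`. In the GNS representation this says
that every matrix coefficient `⟪π b Ω, π D (π c Ω)⟫` vanishes, so `π D = 0` by cyclicity and
`D = 0` by faithfulness.
-/

section Superderivation

variable {F M G Φ S : Type*} [Ring F] [AddCommGroup M] [FunLike Φ F M] [AddMonoidHomClass Φ F M]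
  [SetLike S F] [MulMemClass S F] {A₀ : S} {δ : F → F} {φ : Φ}

theorem apply_mul_superderivation_mul_eq_neg {γ : F → F}
    (hleib : ∀ a ∈ A₀, ∀ b ∈ A₀, δ (a * b) = δ a * b + γ a * δ b)
    (hsusy : ∀ a ∈ A₀, φ (δ a) = 0) {a x c : F} (ha : a ∈ A₀) (hx : x ∈ A₀) (hc : c ∈ A₀) :
    φ (γ a * δ x * c) = -(φ (δ a * x * c) + φ (γ a * γ x * δ c)) := by
  have h := hsusy _ (mul_mem ha (mul_mem hx hc))
  rw [hleib a ha _ (mul_mem hx hc), hleib x hx c hc] at h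
  simp only [mul_add, map_add, ← mul_assoc] at h
  rw [eq_neg_iff_add_eq_zero, ← h]
  abel

variable [TopologicalSpace F] [IsTopologicalRing F] [TopologicalSpace M] [IsTopologicalAddGroup M]
  [T2Space M] [FunLike G F F] [AddMonoidHomClass G F F]

theorem apply_mul_limit_mul_eq_zero_of_tendsto {γ : G} (hγ : Continuous γ) (hφ : Continuous φ)
    (hleib : ∀ a ∈ A₀, ∀ b ∈ A₀, δ (a * b) = δ a * b + γ a * δ b)
    (hsusy : ∀ a ∈ A₀, φ (δ a) = 0) {ι : Type*} {l : Filter ι} [l.NeBot] {u : ι → F} {D : F}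
    (hu : ∀ i, u i ∈ A₀) (hu0 : Tendsto u l (𝓝 0)) (huD : Tendsto (fun i => δ (u i)) l (𝓝 D))
    {a c : F} (ha : a ∈ A₀) (hc : c ∈ A₀) :
    φ (γ a * D * c) = 0 := by
  have hlimD : Tendsto (fun i => φ (γ a * δ (u i) * c)) l (𝓝 (φ (γ a * D * c))) :=
    ((hφ.comp ((continuous_const.mul continuous_id).mul continuous_const)).tendsto D).comp huD
  have hcont : Continuous fun x => -(φ (δ a * x * c) + φ (γ a * γ x * δ c)) :=
    ((hφ.comp ((continuous_const.mul continuous_id).mul continuous_const)).add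
      (hφ.comp ((continuous_const.mul hγ).mul continuous_const))).neg
  have hlim0 : Tendsto (fun i => φ (γ a * δ (u i) * c)) l (𝓝 0) := by
    have h := (hcont.tendsto 0).comp hu0
    simp only [map_zero, mul_zero, zero_mul, add_zero, neg_zero] at h
    exact h.congr fun i => (apply_mul_superderivation_mul_eq_neg hleib hsusy ha (hu i) hc).symm
  exact tendsto_nhds_unique hlimD hlim0

end Superderivation

theorem forall_apply_mul_mul_eq_zero_of_dense {F M : Type*} [Mul F] [TopologicalSpace F]
    [ContinuousMul F] [TopologicalSpace M] [T2Space M] [Zero M] {s : Set F} (hs : Dense s)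
    {φ : F → M} {D : F} {γ : F → F} (hγ : Function.Surjective γ) (hγc : Continuous γ)
    (hφ : Continuous φ) (h : ∀ a ∈ s, ∀ c ∈ s, φ (γ a * D * c) = 0) (y c : F) :
    φ (y * D * c) = 0 := by
  have hcont : Continuous fun p : F × F => φ (γ p.1 * D * p.2) :=
    hφ.comp (((hγc.comp continuous_fst).mul continuous_const).mul continuous_snd)
  have hzero := hcont.ext_on (hs.prod hs) continuous_const fun p hp => h _ hp.1 _ hp.2
  obtain ⟨x, rfl⟩ := hγ y
  exact congrFun hzero (x, c)

theorem ContinuousLinearMap.eq_zero_of_inner_denseRange {𝕜 E E' ι κ : Type*} [RCLike 𝕜]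
    [NormedAddCommGroup E] [InnerProductSpace 𝕜 E] [NormedAddCommGroup E']
    [InnerProductSpace 𝕜 E'] {f : ι → E} {g : κ → E'} (hf : DenseRange f) (hg : DenseRange g)
    (T : E →L[𝕜] E') (h : ∀ i j, inner 𝕜 (g i) (T (f j)) = 0) : T = 0 := by
  have hTf : ∀ j, T (f j) = 0 := fun j => hg.eq_zero_of_inner_right 𝕜 fun i => h i j
  exact hf.equalizer T.continuous continuous_const (funext hTf) |> DFunLike.coe_injective

theorem eq_zero_of_gns_star_mul_mul {A H : Type*} [Semiring A] [StarRing A] [Algebra ℂ A]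
    [NormedAddCommGroup H] [InnerProductSpace ℂ H] [CompleteSpace H]
    (π : A →⋆ₐ[ℂ] (H →L[ℂ] H)) (Ω : H) (hcyclic : DenseRange fun x => π x Ω)
    (hfaithful : Function.Injective π) {d : A}
    (h : ∀ b c, inner ℂ Ω (π (star b * d * c) Ω) = 0) : d = 0 := by
  have hcoeff : ∀ b c, inner ℂ (π b Ω) (π d (π c Ω)) = 0 := fun b c => by
    simpa [map_star, ContinuousLinearMap.star_eq_adjoint,
      ContinuousLinearMap.adjoint_inner_right] using h b c
  exact hfaithful <| by
    simpa using (π d).eq_zero_of_inner_denseRange hcyclic hcyclic hcoeff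

theorem superderivation_closable_of_faithful_susy_state_general
    {F : Type*} [NormedRing F] [StarRing F] [CStarRing F] [NormedAlgebra ℂ F]
    [StarModule ℂ F] [CompleteSpace F]
    {H : Type*} [NormedAddCommGroup H] [InnerProductSpace ℂ H] [CompleteSpace H]
    (γ : F ≃⋆ₐ[ℂ] F)
    (A₀ : StarSubalgebra ℂ F)
    (hA₀dense : Dense (A₀ : Set F))
    (δ : F →ₗ[ℂ] F)
    (hleib : ∀ a ∈ A₀, ∀ b ∈ A₀, δ (a * b) = δ a * b + γ a * δ b)
    (φ : F →ₗ[ℂ] ℂ)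
    (hsusy : ∀ a ∈ A₀, φ (δ a) = 0)
    (π : F →⋆ₐ[ℂ] (H →L[ℂ] H)) (Ω : H)
    (hGNS : ∀ x : F, φ x = inner ℂ Ω (π x Ω))
    (hcyclic : Dense (Set.range fun x : F => π x Ω))
    (hfaithful : Function.Injective π) :
    ∀ (u : ℕ → F) (D : F), (∀ n, u n ∈ A₀) →
      Filter.Tendsto u Filter.atTop (nhds 0) →
      Filter.Tendsto (fun n => δ (u n)) Filter.atTop (nhds D) →
      D = 0 := by
  intro u D hu hu0 huD
  let : CStarAlgebra F := { }
  have hπΩ : Continuous fun x : F => π x Ω :=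
    (ContinuousLinearMap.apply ℂ H Ω).continuous.comp (map_continuous π)
  have hφ : Continuous φ := by
    rw [show ⇑φ = fun x => inner ℂ Ω (π x Ω) from funext hGNS]
    exact continuous_const.inner hπΩ
  have hγ : Continuous γ := (StarAlgEquiv.isometry γ).continuous
  have hD : ∀ y c, φ (y * D * c) = 0 :=
    forall_apply_mul_mul_eq_zero_of_dense hA₀dense γ.surjective hγ hφ fun a ha c hc =>
      apply_mul_limit_mul_eq_zero_of_tendsto hγ hφ hleib hsusy hu hu0 huD ha hc
  exact eq_zero_of_gns_star_mul_mul π Ω hcyclic hfaithful fun b c => by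
    rw [← hGNS]; exact hD (star b) c

/-- Suppose a supersymmetric state `φ` with respect to `δ` on a
norm-dense `A₀` exists, and the GNS representation `(π, H, Ω)` of `φ` is
faithful.  Then `δ` restricted to `A₀` is closable in the norm of `F`: if
`Aₙ ∈ A₀`, `Aₙ → 0` and `δ Aₙ → D` in norm, then `D = 0`. -/
theorem superderivation_closable_of_faithful_susy_state
    {F : Type*} [NormedRing F] [StarRing F] [CStarRing F] [NormedAlgebra ℂ F]
    [StarModule ℂ F] [CompleteSpace F]
    {H : Type*} [NormedAddCommGroup H] [InnerProductSpace ℂ H] [CompleteSpace H]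
    (γ : F ≃⋆ₐ[ℂ] F) (hγ : ∀ x, γ (γ x) = x)
    (A₀ : StarSubalgebra ℂ F) (hA₀ : ∀ a ∈ A₀, γ a ∈ A₀)
    (hA₀dense : Dense (A₀ : Set F))
    (δ : F →ₗ[ℂ] F)
    (hodd : ∀ a ∈ A₀, δ (γ a) = - γ (δ a))
    (hleib : ∀ a ∈ A₀, ∀ b ∈ A₀, δ (a * b) = δ a * b + γ a * δ b)
    (φ : F →ₗ[ℂ] ℂ) (hφpos : ∀ x : F, 0 ≤ φ (star x * x)) (hφ1 : φ 1 = 1)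
    (hsusy : ∀ a ∈ A₀, φ (δ a) = 0)
    (π : F →⋆ₐ[ℂ] (H →L[ℂ] H)) (Ω : H)
    (hGNS : ∀ x : F, φ x = inner ℂ Ω (π x Ω))
    (hcyclic : Dense (Set.range fun x : F => π x Ω))
    (hfaithful : Function.Injective π) :
    ∀ (u : ℕ → F) (D : F), (∀ n, u n ∈ A₀) →
      Filter.Tendsto u Filter.atTop (nhds 0) →
      Filter.Tendsto (fun n => δ (u n)) Filter.atTop (nhds D) →
      D = 0 :=
  superderivation_closable_of_faithful_susy_state_general γ A₀ hA₀dense δ hleib φ hsusy π Ω hGNS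
    hcyclic hfaithful
end

section
/- The set of supersymmetric states is a face of the state space: if φ is supersymmetric with respect to a symmetric superderivation δ_s and φ = Σᵢ λᵢφᵢ is a finite convex combination of states (λᵢ > 0, Σλᵢ = 1), then each φᵢ is supersymmetric with respect to δ_s. -/
open scoped ComplexOrder

/-! The Hamiltonian is affiliated to `π(F)''`, so it commutes with the projection `p'` defining a
component state and therefore annihilates `p' Ω` along with `Ω`. Since `H = Q_s²` with `Q_s`
symmetric, `‖Q_s p' Ω‖² = ⟪p' Ω, H p' Ω⟫ = 0`. As `p'` commutes with `π(F)`, the component state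
evaluated at `δ_s(A)` is a multiple of `⟪p' Ω, Q_s π(A) Ω⟫ = ⟪Q_s p' Ω, π(A) Ω⟫ = 0`. -/

open LinearPMap in
theorem IsSelfAdjoint.isFormalAdjoint {𝕜 E : Type*} [RCLike 𝕜] [NormedAddCommGroup E]
    [InnerProductSpace 𝕜 E] [CompleteSpace E] {T : E →ₗ.[𝕜] E} (hT : IsSelfAdjoint T) :
    T.IsFormalAdjoint T := by
  simpa only [isSelfAdjoint_def.mp hT] using adjoint_isFormalAdjoint hT.dense_domain

theorem LinearPMap.IsFormalAdjoint.apply_eq_zero_of_apply_apply_eq_zero {𝕜 E : Type*} [RCLike 𝕜]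
    [NormedAddCommGroup E] [InnerProductSpace 𝕜 E] {T : E →ₗ.[𝕜] E} (hT : T.IsFormalAdjoint T)
    (x : T.domain) (hx : T x ∈ T.domain) (hTTx : T ⟨T x, hx⟩ = 0) : T x = 0 :=
  inner_self_eq_zero.mp <| by rw [hT x ⟨T x, hx⟩, hTTx, inner_zero_right]

theorem IsStarProjection.inner_apply_apply {𝕜 E : Type*} [RCLike 𝕜] [NormedAddCommGroup E]
    [InnerProductSpace 𝕜 E] [CompleteSpace E] {p : E →L[𝕜] E} (hp : IsStarProjection p)
    (u v : E) : inner 𝕜 (p u) (p v) = inner 𝕜 (p u) v := by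
  rw [← ContinuousLinearMap.adjoint_inner_left, ← ContinuousLinearMap.star_eq_adjoint,
    hp.isSelfAdjoint.star_eq, ← mul_apply_eq_comp, hp.isIdempotentElem.eq]

theorem supersymmetric_states_form_face_general
    {F : Type*} [NormedRing F] [StarRing F] [NormedAlgebra ℂ F] [StarModule ℂ F]
    {H : Type*} [NormedAddCommGroup H] [InnerProductSpace ℂ H] [CompleteSpace H]
    (A₀ : StarSubalgebra ℂ F) (δs : F →ₗ[ℂ] F)
    -- GNS representation of φ
    (π : F →⋆ₐ[ℂ] (H →L[ℂ] H)) (Ω : H)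
    -- the self-adjoint supercharge with Q_s Ω = 0
    (Qs : H →ₗ.[ℂ] H) (hQssa : IsSelfAdjoint Qs)
    (hQsdom : ∀ a ∈ A₀, π a Ω ∈ Qs.domain)
    (hQsact : ∀ a ∈ A₀, ∀ h : π a Ω ∈ Qs.domain, Qs ⟨π a Ω, h⟩ = π (δs a) Ω)
    -- the Hamiltonian H = Q_s², annihilating Ω and affiliated to π(F)''
    (Hop : H →ₗ.[ℂ] H)
    (hΩH : Ω ∈ Hop.domain) (hHΩ : ∀ h : Ω ∈ Hop.domain, Hop ⟨Ω, h⟩ = 0)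
    (hHdom : ∀ ξ : H, ξ ∈ Hop.domain ↔ ∃ h : ξ ∈ Qs.domain, Qs ⟨ξ, h⟩ ∈ Qs.domain)
    (hHQ : ∀ (ξ : H) (hξ : ξ ∈ Hop.domain) (h1 : ξ ∈ Qs.domain)
      (h2 : Qs ⟨ξ, h1⟩ ∈ Qs.domain), Hop ⟨ξ, hξ⟩ = Qs ⟨Qs ⟨ξ, h1⟩, h2⟩)
    (hHaff : ∀ p : H →L[ℂ] H, IsSelfAdjoint p → p ∘L p = p →
      (∀ x : F, p ∘L π x = π x ∘L p) →
      (∀ (ξ : H) (hξ : ξ ∈ Hop.domain), p ξ ∈ Hop.domain) ∧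
      (∀ (ξ : H) (hξ : ξ ∈ Hop.domain) (h2 : p ξ ∈ Hop.domain),
        Hop ⟨p ξ, h2⟩ = p (Hop ⟨ξ, hξ⟩)))
    -- the finite convex decomposition of φ into states φᵢ
    (n : ℕ) (φi : Fin n → (F →ₗ[ℂ] ℂ))
    -- each component state is given by a projection in the commutant [BR, Th.2.3.19]
    (hcomp : ∀ i, ∃ p : H →L[ℂ] H, IsSelfAdjoint p ∧ p ∘L p = p ∧
      (∀ x : F, p ∘L π x = π x ∘L p) ∧ (inner ℂ Ω (p Ω) : ℂ) ≠ 0 ∧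
      ∀ x : F, φi i x = (inner ℂ Ω (p Ω) : ℂ)⁻¹ * inner ℂ (p Ω) (π x (p Ω))) :
    ∀ i, ∀ a ∈ A₀, φi i (δs a) = 0 := by
  intro i a ha
  obtain ⟨p, hpsa, hpidem, hpcomm, -, hφi⟩ := hcomp i
  have hp : IsStarProjection p := ⟨hpidem, hpsa⟩
  obtain ⟨hpdom, hpcommH⟩ := hHaff p hpsa hpidem hpcomm
  have hpΩ : p Ω ∈ Hop.domain := hpdom Ω hΩH
  obtain ⟨hpΩQ, hQpΩQ⟩ := (hHdom (p Ω)).mp hpΩ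
  have hHpΩ : Hop ⟨p Ω, hpΩ⟩ = 0 := by rw [hpcommH Ω hΩH hpΩ, hHΩ, map_zero]
  have hQpΩ : Qs ⟨p Ω, hpΩQ⟩ = 0 :=
    hQssa.isFormalAdjoint.apply_eq_zero_of_apply_apply_eq_zero _ hQpΩQ
      (by rw [← hHQ _ hpΩ, hHpΩ])
  have hpπ : π (δs a) (p Ω) = p (π (δs a) Ω) := congr($(hpcomm (δs a)) Ω).symm
  calc φi i (δs a)
      = (inner ℂ Ω (p Ω))⁻¹ * inner ℂ (p Ω) (Qs ⟨π a Ω, hQsdom a ha⟩) := by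
        rw [hφi, hpπ, hp.inner_apply_apply, hQsact a ha]
    _ = (inner ℂ Ω (p Ω))⁻¹ * inner ℂ (Qs ⟨p Ω, hpΩQ⟩) (π a Ω) := by
        rw [hQssa.isFormalAdjoint ⟨p Ω, hpΩQ⟩ ⟨π a Ω, hQsdom a ha⟩]
    _ = 0 := by rw [hQpΩ, inner_zero_left, mul_zero]

/-- The set of supersymmetric states is a face of the state space:
if `φ` is supersymmetric with respect to a symmetric superderivation `δ_s` and
`φ = Σᵢ λᵢ φᵢ` is a finite convex combination of states (`λᵢ > 0`, `Σ λᵢ = 1`),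
then each `φᵢ` is supersymmetric with respect to `δ_s`.
(The hypotheses record the facts available in the GNS representation of `φ`:
the supercharge `Q_s` is self-adjoint with `Q_s Ω = 0`, the Hamiltonian
`H = Q_s²` is affiliated to `π(F)''`, and each component state is given by a
projection in the commutant.) -/
theorem supersymmetric_states_form_face
    {F : Type*} [NormedRing F] [StarRing F] [CStarRing F] [NormedAlgebra ℂ F]
    [StarModule ℂ F] [CompleteSpace F]
    {H : Type*} [NormedAddCommGroup H] [InnerProductSpace ℂ H] [CompleteSpace H]
    (γ : F ≃⋆ₐ[ℂ] F) (hγ : ∀ x, γ (γ x) = x)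
    (A₀ : StarSubalgebra ℂ F) (hA₀ : ∀ a ∈ A₀, γ a ∈ A₀)
    (δs : F →ₗ[ℂ] F)
    (hodd : ∀ a ∈ A₀, δs (γ a) = - γ (δs a))
    (hleib : ∀ a ∈ A₀, ∀ b ∈ A₀, δs (a * b) = δs a * b + γ a * δs b)
    (hsym : ∀ x : F, - star (δs (γ (star x))) = δs x)
    (φ : F →ₗ[ℂ] ℂ) (hφpos : ∀ x : F, 0 ≤ φ (star x * x)) (hφ1 : φ 1 = 1)
    (hsusy : ∀ a ∈ A₀, φ (δs a) = 0)
    -- GNS representation of φ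
    (π : F →⋆ₐ[ℂ] (H →L[ℂ] H)) (Ω : H)
    (hGNS : ∀ x : F, φ x = inner ℂ Ω (π x Ω))
    (hdense :
      Dense (((Subalgebra.toSubmodule A₀.toSubalgebra).map (gnsVec π Ω) : Submodule ℂ H)
        : Set H))
    -- the self-adjoint supercharge with Q_s Ω = 0
    (Qs : H →ₗ.[ℂ] H) (hQssa : IsSelfAdjoint Qs)
    (hQsdom : ∀ a ∈ A₀, π a Ω ∈ Qs.domain)
    (hQsact : ∀ a ∈ A₀, ∀ h : π a Ω ∈ Qs.domain, Qs ⟨π a Ω, h⟩ = π (δs a) Ω)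
    (hΩQ : Ω ∈ Qs.domain) (hQsΩ : ∀ h : Ω ∈ Qs.domain, Qs ⟨Ω, h⟩ = 0)
    -- the Hamiltonian H = Q_s², annihilating Ω and affiliated to π(F)''
    (Hop : H →ₗ.[ℂ] H) (hHsa : IsSelfAdjoint Hop)
    (hΩH : Ω ∈ Hop.domain) (hHΩ : ∀ h : Ω ∈ Hop.domain, Hop ⟨Ω, h⟩ = 0)
    (hHdom : ∀ ξ : H, ξ ∈ Hop.domain ↔ ∃ h : ξ ∈ Qs.domain, Qs ⟨ξ, h⟩ ∈ Qs.domain)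
    (hHQ : ∀ (ξ : H) (hξ : ξ ∈ Hop.domain) (h1 : ξ ∈ Qs.domain)
      (h2 : Qs ⟨ξ, h1⟩ ∈ Qs.domain), Hop ⟨ξ, hξ⟩ = Qs ⟨Qs ⟨ξ, h1⟩, h2⟩)
    (hHaff : ∀ p : H →L[ℂ] H, IsSelfAdjoint p → p ∘L p = p →
      (∀ x : F, p ∘L π x = π x ∘L p) →
      (∀ (ξ : H) (hξ : ξ ∈ Hop.domain), p ξ ∈ Hop.domain) ∧
      (∀ (ξ : H) (hξ : ξ ∈ Hop.domain) (h2 : p ξ ∈ Hop.domain),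
        Hop ⟨p ξ, h2⟩ = p (Hop ⟨ξ, hξ⟩)))
    -- the finite convex decomposition of φ into states φᵢ
    (n : ℕ) (lam : Fin n → ℝ) (φi : Fin n → (F →ₗ[ℂ] ℂ))
    (hlam : ∀ i, 0 < lam i) (hsum : ∑ i, lam i = 1)
    (hipos : ∀ (i) (x : F), 0 ≤ φi i (star x * x)) (hi1 : ∀ i, φi i 1 = 1)
    (hdecomp : ∀ x : F, φ x = ∑ i, (lam i : ℂ) * φi i x)
    -- each component state is given by a projection in the commutant [BR, Th.2.3.19]
    (hcomp : ∀ i, ∃ p : H →L[ℂ] H, IsSelfAdjoint p ∧ p ∘L p = p ∧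
      (∀ x : F, p ∘L π x = π x ∘L p) ∧ (inner ℂ Ω (p Ω) : ℂ) ≠ 0 ∧
      ∀ x : F, φi i x = (inner ℂ Ω (p Ω) : ℂ)⁻¹ * inner ℂ (p Ω) (π x (p Ω))) :
    ∀ i, ∀ a ∈ A₀, φi i (δs a) = 0 :=
  supersymmetric_states_form_face_general A₀ δs π Ω Qs hQssa hQsdom hQsact Hop hΩH hHΩ hHdom hHQ
    hHaff n φi hcomp
end

section
/- In the CAR algebra over ℤ with superderivation δ determined by local supercharges Ψ({2j-1, 2j, 2j+1}) = a_{2j+1} a*_{2j} a_{2j-1} (j ∈ ℤ, Ψ = 0 otherwise), both the Fock state φ₁ (determined by φ₁(a*_j a_j) = 0 for all j) and the anti-Fock state φ₂ (determined by φ₂(a_j a*_j) = 0 for all j) are supersymmetric: φᵢ(δ(A)) = 0 for all strictly local A. -/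
open scoped ComplexOrder

/-- The local supercharge `Ψ({2j-1, 2j, 2j+1}) = a_{2j+1} a*_{2j} a_{2j-1}` of the
supersymmetric fermion lattice model on `ℤ`. -/
def latticeSupercharge {F : Type*} [Ring F] [StarRing F] (a : ℤ → F) (j : ℤ) : F :=
  a (2 * j + 1) * star (a (2 * j)) * a (2 * j - 1)

private lemma aux_real_coeff_zero {c s : ℂ} (h : ∀ r : ℝ, 0 ≤ c + (r : ℂ) * s) :
    s = 0 := by
  have him : s.im = 0 := by
    have h0 := (Complex.le_def.mp (h 0)).2
    have h1 := (Complex.le_def.mp (h 1)).2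
    simp [Complex.add_im, Complex.mul_im] at h0 h1
    linarith
  have hre : s.re = 0 := by
    by_contra hs
    have h2 := (Complex.le_def.mp (h (-(c.re + 1) / s.re))).1
    simp [Complex.add_re, Complex.mul_re, him] at h2
    rw [div_mul_cancel₀ _ hs] at h2
    linarith
  exact Complex.ext hre him

private lemma aux_cauchy_schwarz {F : Type*} [Ring F] [StarRing F] [Algebra ℂ F]
    [StarModule ℂ F] (φ : F →ₗ[ℂ] ℂ) (hpos : ∀ x : F, 0 ≤ φ (star x * x))
    {x : F} (hx : φ (star x * x) = 0) (y : F) :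
    φ (star x * y) = 0 ∧ φ (star y * x) = 0 := by
  set A := φ (star x * y) with hA
  set B := φ (star y * x) with hB
  set c := φ (star y * y) with hc
  have key : ∀ t : ℂ, 0 ≤ c + (starRingEnd ℂ t) * A + t * B := by
    intro t
    have h := hpos (y + t • x)
    have expand : star (y + t • x) * (y + t • x)
        = star y * y + (starRingEnd ℂ t) • (star x * y) + t • (star y * x)
          + (t * (starRingEnd ℂ t)) • (star x * x) := by
      rw [star_add, star_smul]
      simp only [add_mul, mul_add, smul_add, smul_mul_assoc, mul_smul_comm, smul_smul]
      simp only [Complex.star_def]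
      abel
    rw [expand] at h
    simp only [map_add, map_smul, hx, smul_eq_mul, mul_zero, add_zero] at h
    exact h
  have hsum : A + B = 0 := by
    apply aux_real_coeff_zero (c := c)
    intro r
    have hk := key (r : ℂ)
    simpa [Complex.conj_ofReal, mul_add, add_assoc] using hk
  have hdiff : Complex.I * (B - A) = 0 := by
    apply aux_real_coeff_zero (c := c)
    intro r
    have hk := key ((r : ℂ) * Complex.I)
    have e : c + (starRingEnd ℂ) ((r : ℂ) * Complex.I) * A + (r : ℂ) * Complex.I * B
        = c + (r : ℂ) * (Complex.I * (B - A)) := by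
      simp only [map_mul, Complex.conj_ofReal, Complex.conj_I]
      ring
    rwa [e] at hk
  have hBA : B = A :=
    sub_eq_zero.mp ((mul_eq_zero.mp hdiff).resolve_left Complex.I_ne_zero)
  have hA0 : A = 0 := by
    rw [hBA] at hsum
    linear_combination hsum / 2
  exact ⟨hA0, hBA.trans hA0⟩

/-- In the CAR algebra over `ℤ` with the superderivation `δ`
determined by the local supercharges `Ψ({2j-1, 2j, 2j+1}) = a_{2j+1} a*_{2j} a_{2j-1}`
(and `Ψ = 0` otherwise), both the Fock state `φ₁` (with `φ₁ (a*_j a_j) = 0` for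
all `j`) and the anti-Fock state `φ₂` (with `φ₂ (a_j a*_j) = 0` for all `j`) are
supersymmetric: `φᵢ (δ A) = 0` for all strictly local `A`. -/
theorem fock_and_antifock_states_supersymmetric
    {F : Type*} [NormedRing F] [StarRing F] [CStarRing F] [NormedAlgebra ℂ F]
    [StarModule ℂ F] [CompleteSpace F]
    (a : ℤ → F)
    -- canonical anticommutation relations
    (hCAR1 : ∀ i j : ℤ, star (a i) * a j + a j * star (a i) = if i = j then 1 else 0)
    (hCAR2 : ∀ i j : ℤ, a i * a j + a j * a i = 0)
    -- the grading automorphism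
    (γ : F ≃⋆ₐ[ℂ] F) (hγ2 : ∀ x, γ (γ x) = x) (hγa : ∀ j : ℤ, γ (a j) = - a j)
    -- the superderivation determined by the local supercharges: on every strictly
    -- local element `A` (supported in a finite set `I`) it is given by the finite
    -- sum of graded commutators `Σ_{X ∩ I ≠ ∅} [Ψ(X), A]_γ`
    (δ : F →ₗ[ℂ] F)
    (hδ : ∀ (I : Finset ℤ) (A : F), A ∈ StarAlgebra.adjoin ℂ (a '' (I : Set ℤ)) →
      δ A = ∑ j ∈ I.biUnion (fun i => ({(i + 1) / 2, i / 2, (i - 1) / 2} : Finset ℤ)),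
        (latticeSupercharge a j * A - γ A * latticeSupercharge a j))
    -- the Fock state φ₁ and the anti-Fock state φ₂
    (φ₁ φ₂ : F →ₗ[ℂ] ℂ)
    (hφ₁pos : ∀ x : F, 0 ≤ φ₁ (star x * x)) (hφ₁1 : φ₁ 1 = 1)
    (hφ₂pos : ∀ x : F, 0 ≤ φ₂ (star x * x)) (hφ₂1 : φ₂ 1 = 1)
    (hFock : ∀ j : ℤ, φ₁ (star (a j) * a j) = 0)
    (hAntiFock : ∀ j : ℤ, φ₂ (a j * star (a j)) = 0) :
    ∀ (I : Finset ℤ), ∀ A ∈ StarAlgebra.adjoin ℂ (a '' (I : Set ℤ)),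
      φ₁ (δ A) = 0 ∧ φ₂ (δ A) = 0 := by
  -- consequences of Cauchy–Schwarz for the two states
  have h1L : ∀ (j : ℤ) (y : F), φ₁ (star (a j) * y) = 0 := fun j y =>
    (aux_cauchy_schwarz φ₁ hφ₁pos (hFock j) y).1
  have h1R : ∀ (j : ℤ) (z : F), φ₁ (z * a j) = 0 := fun j z => by
    have := (aux_cauchy_schwarz φ₁ hφ₁pos (hFock j) (star z)).2
    rwa [star_star] at this
  have hAF : ∀ j : ℤ, φ₂ (star (star (a j)) * star (a j)) = 0 := fun j => by
    rw [star_star]; exact hAntiFock j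
  have h2L : ∀ (j : ℤ) (y : F), φ₂ (a j * y) = 0 := fun j y => by
    have := (aux_cauchy_schwarz φ₂ hφ₂pos (hAF j) y).1
    rwa [star_star] at this
  have h2R : ∀ (j : ℤ) (z : F), φ₂ (z * star (a j)) = 0 := fun j z => by
    have := (aux_cauchy_schwarz φ₂ hφ₂pos (hAF j) (star z)).2
    rwa [star_star] at this
  -- anticommutation consequences
  have hc1 : ∀ j : ℤ, a (2 * j + 1) * star (a (2 * j))
      = -(star (a (2 * j)) * a (2 * j + 1)) := fun j => by
    have h := hCAR1 (2 * j) (2 * j + 1)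
    rw [if_neg (by omega)] at h
    rw [add_comm] at h
    exact eq_neg_of_add_eq_zero_left h
  have hc2 : ∀ j : ℤ, star (a (2 * j)) * a (2 * j - 1)
      = -(a (2 * j - 1) * star (a (2 * j))) := fun j => by
    have h := hCAR1 (2 * j) (2 * j - 1)
    rw [if_neg (by omega)] at h
    exact eq_neg_of_add_eq_zero_left h
  intro I A hA
  constructor
  · rw [hδ I A hA, map_sum]
    apply Finset.sum_eq_zero
    intro j _
    rw [map_sub]
    have e1 : latticeSupercharge a j * A
        = -(star (a (2 * j)) * (a (2 * j + 1) * (a (2 * j - 1) * A))) := by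
      unfold latticeSupercharge
      rw [hc1 j]
      noncomm_ring
    have e2 : γ A * latticeSupercharge a j
        = (γ A * (a (2 * j + 1) * star (a (2 * j)))) * a (2 * j - 1) := by
      unfold latticeSupercharge
      noncomm_ring
    rw [e1, e2, map_neg, h1L, h1R, neg_zero, sub_zero]
  · rw [hδ I A hA, map_sum]
    apply Finset.sum_eq_zero
    intro j _
    rw [map_sub]
    have e1 : latticeSupercharge a j * A
        = a (2 * j + 1) * (star (a (2 * j)) * (a (2 * j - 1) * A)) := by
      unfold latticeSupercharge
      noncomm_ring
    have e2 : γ A * latticeSupercharge a j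
        = -((γ A * (a (2 * j + 1) * a (2 * j - 1))) * star (a (2 * j))) := by
      unfold latticeSupercharge
      rw [mul_assoc (a (2 * j + 1)), hc2 j]
      noncomm_ring
    rw [e1, e2, map_neg, h2L, h2R, neg_zero, sub_zero]
end
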